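/- Let (X,d) be a metric space with finite diameter, let μ, ν be Radon probability measures on X with finite first moment, and let σ be a partial transport plan between μ and ν (a Radon measure on X × X whose marginals are dominated setwise by μ and ν respectively). Then σ can be extended to a full transport plan σ̃ between μ and ν (i.e., σ̃ ≥ σ and σ̃ has marginals exactly μ and ν) whose cost satisfies cost(σ̃) ≤ cost(σ) + (1 − mass(σ)) · diam(X), where cost(τ) = ∫_{X×X} d(x,y) dτ and mass(σ) = σ(X × X). -/

import Mathlib

open MeasureTheory
open scoped ENNReal

noncomputable section

/-! The part of `μ` and `ν` left unmatched by `σ` has the same mass `1 - σ(X × X)` on both sides,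
so it can be matched by the product of the two residual measures, rescaled by the inverse of
that mass. Every pair is then transported at cost at most `diam X`, which gives the extra cost
`(1 - σ(X × X)) ⬝ diam X`. -/

namespace MeasureTheory.Measure

open Set

variable {X Y : Type*} [MeasurableSpace X] [MeasurableSpace Y]

lemma inv_measure_univ_mul_smul_self (μ : Measure X) [IsFiniteMeasure μ] :
    ((μ univ)⁻¹ * μ univ) • μ = μ := by
  rcases eq_zero_or_neZero μ with rfl | _
  · simp
  · rw [ENNReal.inv_mul_cancel (NeZero.ne _) (measure_ne_top _ _), one_smul]

-- If `μ = 0` then `(μ univ)⁻¹ = ∞` scales the zero measure, so no mass-zero case split arises.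
def indepCoupling (μ : Measure X) (ν : Measure Y) : Measure (X × Y) :=
  (μ univ)⁻¹ • μ.prod ν

section indepCoupling

variable {μ : Measure X} {ν : Measure Y} [IsFiniteMeasure ν]

lemma indepCoupling_map_fst [IsFiniteMeasure μ] (h : μ univ = ν univ) :
    (indepCoupling μ ν).map Prod.fst = μ := by
  rw [indepCoupling, Measure.map_smul, map_fst_prod, smul_smul,
    ← h, inv_measure_univ_mul_smul_self]

lemma indepCoupling_map_snd (h : μ univ = ν univ) : (indepCoupling μ ν).map Prod.snd = ν := by
  rw [indepCoupling, Measure.map_smul, map_snd_prod, smul_smul,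
    h, inv_measure_univ_mul_smul_self]

lemma indepCoupling_apply_univ [IsFiniteMeasure μ] (h : μ univ = ν univ) :
    indepCoupling μ ν univ = μ univ := by
  conv_rhs => rw [← indepCoupling_map_fst h]
  rw [map_apply measurable_fst MeasurableSet.univ, preimage_univ]

end indepCoupling

variable {σ : Measure (X × Y)}

lemma map_fst_le_of_forall_prod_univ_le {μ : Measure X}
    (h : ∀ E : Set X, MeasurableSet E → σ (E ×ˢ univ) ≤ μ E) : σ.map Prod.fst ≤ μ :=
  le_iff.2 fun E hE => by rw [map_apply measurable_fst hE, ← prod_univ]; exact h E hE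

lemma map_snd_le_of_forall_univ_prod_le {ν : Measure Y}
    (h : ∀ E : Set Y, MeasurableSet E → σ (univ ×ˢ E) ≤ ν E) : σ.map Prod.snd ≤ ν :=
  le_iff.2 fun E hE => by rw [map_apply measurable_snd hE, ← univ_prod]; exact h E hE

lemma sub_map_fst_apply_univ {μ : Measure X} [IsFiniteMeasure μ] (h : σ.map Prod.fst ≤ μ) :
    (μ - σ.map Prod.fst) univ = μ univ - σ univ := by
  have := isFiniteMeasure_of_le μ h
  rw [sub_apply MeasurableSet.univ h, map_apply measurable_fst MeasurableSet.univ, preimage_univ]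

lemma sub_map_snd_apply_univ {ν : Measure Y} [IsFiniteMeasure ν] (h : σ.map Prod.snd ≤ ν) :
    (ν - σ.map Prod.snd) univ = ν univ - σ univ := by
  have := isFiniteMeasure_of_le ν h
  rw [sub_apply MeasurableSet.univ h, map_apply measurable_snd MeasurableSet.univ, preimage_univ]

end MeasureTheory.Measure

lemma MeasureTheory.lintegral_edist_le_measure_univ_mul_diam {X : Type*} [PseudoEMetricSpace X]
    [MeasurableSpace X] (τ : Measure (X × X)) :
    ∫⁻ p, edist p.1 p.2 ∂τ ≤ τ Set.univ * Metric.ediam (Set.univ : Set X) :=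
  calc ∫⁻ p, edist p.1 p.2 ∂τ ≤ ∫⁻ _, Metric.ediam (Set.univ : Set X) ∂τ :=
        lintegral_mono fun _ => Metric.edist_le_ediam_of_mem (Set.mem_univ _) (Set.mem_univ _)
    _ = τ Set.univ * Metric.ediam (Set.univ : Set X) := by rw [lintegral_const, mul_comm]

open MeasureTheory.Measure in
theorem stmt1_general {X : Type*} [MetricSpace X] [MeasurableSpace X]
    (μ ν : Measure X) [IsProbabilityMeasure μ] [IsProbabilityMeasure ν]
    (σ : Measure (X × X))
    (hσ1 : ∀ E : Set X, MeasurableSet E → σ (E ×ˢ (Set.univ : Set X)) ≤ μ E)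
    (hσ2 : ∀ E : Set X, MeasurableSet E → σ ((Set.univ : Set X) ×ˢ E) ≤ ν E) :
    ∃ σt : Measure (X × X), σ ≤ σt ∧
      σt.map Prod.fst = μ ∧ σt.map Prod.snd = ν ∧
      ∫⁻ p, edist p.1 p.2 ∂σt ≤ ∫⁻ p, edist p.1 p.2 ∂σ +
        (1 - σ Set.univ) * EMetric.diam (Set.univ : Set X) := by
  have hμ : σ.map Prod.fst ≤ μ := map_fst_le_of_forall_prod_univ_le hσ1
  have hν : σ.map Prod.snd ≤ ν := map_snd_le_of_forall_univ_prod_le hσ2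
  have := isFiniteMeasure_of_le μ hμ
  have := isFiniteMeasure_of_le ν hν
  have hμres : (μ - σ.map Prod.fst) Set.univ = 1 - σ Set.univ := by
    rw [sub_map_fst_apply_univ hμ, measure_univ (μ := μ)]
  have hres : (μ - σ.map Prod.fst) Set.univ = (ν - σ.map Prod.snd) Set.univ := by
    rw [hμres, sub_map_snd_apply_univ hν, measure_univ (μ := ν)]
  refine ⟨σ + indepCoupling (μ - σ.map Prod.fst) (ν - σ.map Prod.snd),
    Measure.le_add_right le_rfl, ?_, ?_, ?_⟩
  · rw [Measure.map_add _ _ measurable_fst, indepCoupling_map_fst hres, add_comm,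
      Measure.sub_add_cancel_of_le hμ]
  · rw [Measure.map_add _ _ measurable_snd, indepCoupling_map_snd hres, add_comm,
      Measure.sub_add_cancel_of_le hν]
  · rw [lintegral_add_measure, ← hμres, ← indepCoupling_apply_univ hres]
    gcongr
    exact lintegral_edist_le_measure_univ_mul_diam _

/-- Extension of a partial transport plan to a full transport plan: if `X` has finite diameter,
`μ, ν` are probability measures on `X` with finite first moment, and `σ` is a partial transport
plan between `μ` and `ν` (its marginals are setwise dominated by `μ` and `ν`), then `σ` extends
to a transport plan `σ̃` between `μ` and `ν` with
`cost(σ̃) ≤ cost(σ) + (1 − mass(σ)) ⬝ diam(X)`. -/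
theorem stmt1 {X : Type*} [MetricSpace X] [MeasurableSpace X] [BorelSpace X]
    (hdiam : EMetric.diam (Set.univ : Set X) ≠ ⊤)
    (μ ν : Measure X) [IsProbabilityMeasure μ] [IsProbabilityMeasure ν]
    (hμmom : ∃ y : X, ∫⁻ x, edist x y ∂μ ≠ ⊤) (hνmom : ∃ y : X, ∫⁻ x, edist x y ∂ν ≠ ⊤)
    (σ : Measure (X × X))
    (hσ1 : ∀ E : Set X, MeasurableSet E → σ (E ×ˢ (Set.univ : Set X)) ≤ μ E)
    (hσ2 : ∀ E : Set X, MeasurableSet E → σ ((Set.univ : Set X) ×ˢ E) ≤ ν E) :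
    ∃ σt : Measure (X × X), σ ≤ σt ∧
      σt.map Prod.fst = μ ∧ σt.map Prod.snd = ν ∧
      ∫⁻ p, edist p.1 p.2 ∂σt ≤ ∫⁻ p, edist p.1 p.2 ∂σ +
        (1 - σ Set.univ) * EMetric.diam (Set.univ : Set X) :=
  stmt1_general μ ν σ hσ1 hσ2

end
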